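/- arXiv:2204.05527 — 2 statements merged into one kernel-verified Lean document; each statement's English description precedes it below -/
import Mathlib

section
/- Let σ₁, σ₀ > 0, c ∈ ℝ, and γ ∈ [0,1] with γ/σ₁ > (1−γ)/σ₀. Then the supremum over pairs (μ₁, μ₀) with μ₁ > μ₀ of (μ₁ − μ₀)·Φ(c − μ₁·γ/σ₁ + μ₀·(1−γ)/σ₀) is +∞, where Φ is the standard normal cumulative distribution function. Consequently any minimax-optimal sampling fraction γ must satisfy γ ≤ σ₁/(σ₁ + σ₀). -/
/-- The standard normal cumulative distribution function
`Φ(x) = ∫_{−∞}^{x} (2π)^{−1/2} e^{−t²/2} dt`. -/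
noncomputable def stdNormalCDF (x : ℝ) : ℝ :=
  ∫ t in Set.Iic x, (Real.sqrt (2 * Real.pi))⁻¹ * Real.exp (-(t ^ 2) / 2)

lemma gauss_integrable : MeasureTheory.Integrable
    (fun t : ℝ => (Real.sqrt (2 * Real.pi))⁻¹ * Real.exp (-(t ^ 2) / 2)) := by
  have h := (integrable_exp_neg_mul_sq (by norm_num : (0:ℝ) < 1/2)).const_mul
    (Real.sqrt (2 * Real.pi))⁻¹
  convert h using 2 with t
  ring_nf

lemma stdNormalCDF_pos (c : ℝ) : 0 < stdNormalCDF c := by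
  unfold stdNormalCDF
  rw [MeasureTheory.setIntegral_pos_iff_support_of_nonneg_ae]
  · have : (Function.support fun t : ℝ => (Real.sqrt (2 * Real.pi))⁻¹ *
        Real.exp (-(t ^ 2) / 2)) = Set.univ := by
      ext t
      simp only [Function.mem_support, ne_eq, Set.mem_univ, iff_true]
      positivity
    rw [this, Set.univ_inter, Real.volume_Iic]
    simp
  · filter_upwards with t
    positivity
  · exact gauss_integrable.integrableOn

lemma unbdd_core (σ₁ σ₀ c γ : ℝ)
    (h : (1 - γ) / σ₀ < γ / σ₁) :
    ¬ BddAbove {r : ℝ | ∃ μ₁ μ₀ : ℝ, μ₀ < μ₁ ∧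
        r = (μ₁ - μ₀) * stdNormalCDF (c - μ₁ * γ / σ₁ + μ₀ * (1 - γ) / σ₀)} := by
  rw [not_bddAbove_iff]
  intro M
  set a : ℝ := γ / σ₁ with ha
  set b : ℝ := (1 - γ) / σ₀ with hb
  have hab : 0 < a - b := sub_pos.mpr h
  have hΦ : 0 < stdNormalCDF c := stdNormalCDF_pos c
  set t : ℝ := (max M 0 + 1) / stdNormalCDF c with ht
  have htpos : 0 < t := div_pos (by positivity) hΦ
  set μ₁ : ℝ := -(b * t) / (a - b) with hμ₁
  refine ⟨(μ₁ - (μ₁ - t)) * stdNormalCDF (c - μ₁ * γ / σ₁ + (μ₁ - t) * (1 - γ) / σ₀),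
    ⟨μ₁, μ₁ - t, by linarith, rfl⟩, ?_⟩
  have harg : c - μ₁ * γ / σ₁ + (μ₁ - t) * (1 - γ) / σ₀ = c := by
    have e1 : μ₁ * γ / σ₁ = μ₁ * a := by rw [ha, mul_div_assoc]
    have e2 : (μ₁ - t) * (1 - γ) / σ₀ = (μ₁ - t) * b := by rw [hb, mul_div_assoc]
    rw [e1, e2, hμ₁]
    field_simp
    ring
  rw [harg]
  have : μ₁ - (μ₁ - t) = t := by ring
  rw [this, ht, div_mul_cancel₀ _ hΦ.ne']
  have : M ≤ max M 0 := le_max_left _ _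
  linarith

/-- If `γ/σ₁ > (1−γ)/σ₀`, the supremum over pairs `μ₁ > μ₀` of
`(μ₁ − μ₀)·Φ(c − μ₁γ/σ₁ + μ₀(1−γ)/σ₀)` is `+∞` (the set of such regret values is unbounded
above). Consequently any sampling fraction `γ'` with finite worst-case regret (for some
threshold `c'`) must satisfy `γ' ≤ σ₁/(σ₁ + σ₀)`. -/
theorem unbounded_regret_if_oversampling (σ₁ σ₀ c γ : ℝ)
    (hσ₁ : 0 < σ₁) (hσ₀ : 0 < σ₀) (hγ : γ ∈ Set.Icc (0 : ℝ) 1)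
    (h : (1 - γ) / σ₀ < γ / σ₁) :
    ¬ BddAbove {r : ℝ | ∃ μ₁ μ₀ : ℝ, μ₀ < μ₁ ∧
        r = (μ₁ - μ₀) * stdNormalCDF (c - μ₁ * γ / σ₁ + μ₀ * (1 - γ) / σ₀)} ∧
    ∀ γ' ∈ Set.Icc (0 : ℝ) 1,
      (∃ c' : ℝ, BddAbove {r : ℝ | ∃ μ₁ μ₀ : ℝ, μ₀ < μ₁ ∧
          r = (μ₁ - μ₀) * stdNormalCDF (c' - μ₁ * γ' / σ₁ + μ₀ * (1 - γ') / σ₀)}) →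
      γ' ≤ σ₁ / (σ₁ + σ₀) := by
  refine ⟨unbdd_core σ₁ σ₀ c γ h, ?_⟩
  rintro γ' hγ' ⟨c', hB⟩
  by_contra hlt
  push_neg at hlt
  have hsum : 0 < σ₁ + σ₀ := by linarith
  have h1 : σ₁ < γ' * (σ₁ + σ₀) := (div_lt_iff₀ hsum).mp hlt
  have h2 : (1 - γ') / σ₀ < γ' / σ₁ := by
    rw [div_lt_div_iff₀ hσ₀ hσ₁]
    nlinarith
  exact unbdd_core σ₁ σ₀ c' γ' h2 hB
end

section
/- Let σ₁, σ₀ > 0, let δ* be the unique maximizer of δ ↦ δ·Φ(−δ) over (0, ∞), and set Δ* = 2δ*, γ* = σ₁/(σ₁+σ₀), V* = (σ₁+σ₀)·δ*·Φ(−δ*). Consider the prior placing probability 1/2 on each of the states (μ₁, μ₀) = (σ₁Δ*/2, −σ₀Δ*/2) and (−σ₁Δ*/2, σ₀Δ*/2). Then (γ*, c = 0) and this prior form a saddle point: (i) for every γ ∈ [0,1] and every Borel set A ⊆ ℝ, the Bayes regret (1/2)(σ₁+σ₀)δ*·[P₁(Aᶜ) + P₀(A)] is at least V*, where P₁, P₀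 are Gaussian with means Δ*/2, −Δ*/2 and variance 1 (the law of x₁(1)/σ₁ − x₀(1)/σ₀ under each state, which does not depend on γ); and (ii) for every (μ₁, μ₀) ∈ ℝ², the frequentist regret R(γ*, 0, μ₁, μ₀) = |μ₁−μ₀|·Φ(−|μ₁−μ₀|/(σ₁+σ₀)) is at most V*. -/
open MeasureTheory ProbabilityTheory

lemma gauss_density_eq (m x : ℝ) :
    gaussianPDFReal m 1 x = (Real.sqrt (2 * Real.pi))⁻¹ * Real.exp (-((x - m) ^ 2) / 2) := by
  simp [gaussianPDFReal]

lemma gauss_cdf (m : ℝ) :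
    ∫ x in Set.Iic (0:ℝ), gaussianPDFReal m 1 x = stdNormalCDF (-m) := by
  have hemb : MeasurableEmbedding (fun x : ℝ => x + m) :=
    (Homeomorph.addRight m).measurableEmbedding
  have hmp : MeasurePreserving (fun x : ℝ => x + m) volume volume :=
    measurePreserving_add_right volume m
  have hpre : (fun x : ℝ => x + m) ⁻¹' Set.Iic 0 = Set.Iic (-m) := by
    ext x; simp only [Set.mem_preimage, Set.mem_Iic]; constructor <;> intro <;> linarith
  have := hmp.setIntegral_preimage_emb hemb (gaussianPDFReal m 1) (Set.Iic 0)
  rw [hpre] at this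
  rw [← this, stdNormalCDF]
  refine setIntegral_congr_fun measurableSet_Iic (fun x _ => ?_)
  rw [gauss_density_eq]; ring_nf

lemma gauss_sym (d : ℝ) :
    ∫ x in Set.Ioi (0:ℝ), gaussianPDFReal (-d) 1 x
      = ∫ x in Set.Iic (0:ℝ), gaussianPDFReal d 1 x := by
  have hemb : MeasurableEmbedding (fun x : ℝ => -x) :=
    (Homeomorph.neg ℝ).measurableEmbedding
  have hmp : MeasurePreserving (fun x : ℝ => -x) (volume : Measure ℝ) volume :=
    Measure.measurePreserving_neg volume
  have hpre : (fun x : ℝ => -x) ⁻¹' Set.Ioi 0 = Set.Iio 0 := by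
    ext x; simp
  have := hmp.setIntegral_preimage_emb hemb (gaussianPDFReal (-d) 1) (Set.Ioi 0)
  rw [hpre] at this
  rw [← this, ← integral_Iic_eq_integral_Iio]
  refine setIntegral_congr_fun measurableSet_Iic (fun x _ => ?_)
  rw [gauss_density_eq, gauss_density_eq]; ring_nf

lemma gauss_mono_Iic {d : ℝ} (hd : 0 ≤ d) {x : ℝ} (hx : x ≤ 0) :
    gaussianPDFReal d 1 x ≤ gaussianPDFReal (-d) 1 x := by
  rw [gauss_density_eq, gauss_density_eq]
  refine mul_le_mul_of_nonneg_left (Real.exp_le_exp.mpr ?_)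
    (inv_nonneg.mpr (Real.sqrt_nonneg _))
  nlinarith

lemma gauss_mono_Ioi {d : ℝ} (hd : 0 ≤ d) {x : ℝ} (hx : 0 ≤ x) :
    gaussianPDFReal (-d) 1 x ≤ gaussianPDFReal d 1 x := by
  rw [gauss_density_eq, gauss_density_eq]
  refine mul_le_mul_of_nonneg_left (Real.exp_le_exp.mpr ?_)
    (inv_nonneg.mpr (Real.sqrt_nonneg _))
  nlinarith

lemma stdNormalCDF_nonneg (x : ℝ) : 0 ≤ stdNormalCDF x :=
  setIntegral_nonneg measurableSet_Iic (fun t _ => by positivity)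

-- key testing lower bound
lemma testing_lb {d : ℝ} (hd : 0 ≤ d) (A : Set ℝ) (hA : MeasurableSet A) :
    2 * stdNormalCDF (-d) ≤
      ((gaussianReal d 1) Aᶜ).toReal + ((gaussianReal (-d) 1) A).toReal := by
  have hI : ∀ m : ℝ, ∀ S : Set ℝ, IntegrableOn (gaussianPDFReal m 1) S :=
    fun m S => (integrable_gaussianPDFReal m 1).integrableOn
  have htoReal : ∀ m : ℝ, ∀ S : Set ℝ,
      ((gaussianReal m 1) S).toReal = ∫ x in S, gaussianPDFReal m 1 x := by
    intro m S
    rw [gaussianReal_apply_eq_integral m one_ne_zero S, ENNReal.toReal_ofReal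
      (integral_nonneg (fun x => gaussianPDFReal_nonneg _ _ _))]
  rw [htoReal, htoReal]
  have hsplit : ∀ m : ℝ, ∀ S : Set ℝ, MeasurableSet S →
      ∫ x in S, gaussianPDFReal m 1 x
        = (∫ x in S ∩ Set.Iic 0, gaussianPDFReal m 1 x)
          + ∫ x in S ∩ Set.Ioi 0, gaussianPDFReal m 1 x := by
    intro m S hS
    rw [← setIntegral_union]
    · rw [← Set.inter_union_distrib_left, Set.Iic_union_Ioi, Set.inter_univ]
    · exact (Set.Iic_disjoint_Ioi le_rfl).mono Set.inter_subset_right Set.inter_subset_right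
    · exact hS.inter measurableSet_Ioi
    · exact hI m _
    · exact hI m _
  rw [hsplit d _ hA.compl, hsplit (-d) _ hA]
  have h1 : ∫ x in A ∩ Set.Iic 0, gaussianPDFReal d 1 x
      ≤ ∫ x in A ∩ Set.Iic 0, gaussianPDFReal (-d) 1 x :=
    setIntegral_mono_on (hI _ _) (hI _ _) (hA.inter measurableSet_Iic)
      (fun x hx => gauss_mono_Iic hd hx.2)
  have h2 : ∫ x in Aᶜ ∩ Set.Ioi 0, gaussianPDFReal (-d) 1 x
      ≤ ∫ x in Aᶜ ∩ Set.Ioi 0, gaussianPDFReal d 1 x :=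
    setIntegral_mono_on (hI _ _) (hI _ _) (hA.compl.inter measurableSet_Ioi)
      (fun x hx => gauss_mono_Ioi hd (le_of_lt hx.2))
  have e1 : (∫ x in Aᶜ ∩ Set.Iic 0, gaussianPDFReal d 1 x)
      + ∫ x in A ∩ Set.Iic 0, gaussianPDFReal d 1 x = stdNormalCDF (-d) := by
    rw [← gauss_cdf d, ← setIntegral_union]
    · rw [Set.inter_comm, Set.inter_comm A, ← Set.inter_union_distrib_left,
        Set.compl_union_self, Set.inter_univ]
    · exact disjoint_compl_left.mono Set.inter_subset_left Set.inter_subset_left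
    · exact (hA.inter measurableSet_Iic)
    · exact hI _ _
    · exact hI _ _
  have e2 : (∫ x in Aᶜ ∩ Set.Ioi 0, gaussianPDFReal (-d) 1 x)
      + ∫ x in A ∩ Set.Ioi 0, gaussianPDFReal (-d) 1 x = stdNormalCDF (-d) := by
    rw [← gauss_cdf d, ← gauss_sym d, ← setIntegral_union]
    · rw [Set.inter_comm, Set.inter_comm A, ← Set.inter_union_distrib_left,
        Set.compl_union_self, Set.inter_univ]
    · exact disjoint_compl_left.mono Set.inter_subset_left Set.inter_subset_left
    · exact (hA.inter measurableSet_Ioi)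
    · exact hI _ _
    · exact hI _ _
  linarith

/-- Saddle-point (Nash equilibrium) content of Theorem 1 in the reduced static problem:
with `δ*` the unique maximizer of `δΦ(−δ)` on `(0,∞)`, `Δ* = 2δ*`, `γ* = σ₁/(σ₁+σ₀)` and
`V* = (σ₁+σ₀)δ*Φ(−δ*)`:
(i) for every sampling fraction `γ ∈ [0,1]` and every Borel acceptance region `A ⊆ ℝ`, the
Bayes regret `(1/2)(σ₁+σ₀)δ*·[P₁(Aᶜ) + P₀(A)]` under the symmetric two-point prior is at
least `V*`, where `P₁ = N(Δ*/2, 1)`, `P₀ = N(−Δ*/2, 1)` (the law of the statistic in each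
state, independent of `γ`);
(ii) for every `(μ₁, μ₀)`, the frequentist regret
`R(γ*, 0, μ₁, μ₀) = |μ₁−μ₀|·Φ(−|μ₁−μ₀|/(σ₁+σ₀))` is at most `V*`. -/
theorem neyman_saddle_point (σ₁ σ₀ d : ℝ)
    (hσ₁ : 0 < σ₁) (hσ₀ : 0 < σ₀) (hd : 0 < d)
    (hmax : IsMaxOn (fun δ : ℝ => δ * stdNormalCDF (-δ)) (Set.Ioi 0) d)
    (huniq : ∀ d' : ℝ, 0 < d' →
      IsMaxOn (fun δ : ℝ => δ * stdNormalCDF (-δ)) (Set.Ioi 0) d' → d' = d) :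
    (∀ γ ∈ Set.Icc (0 : ℝ) 1, ∀ A : Set ℝ, MeasurableSet A →
      (σ₁ + σ₀) * (d * stdNormalCDF (-d)) ≤
        (1 / 2) * ((σ₁ + σ₀) * d) *
          (((gaussianReal d 1) Aᶜ).toReal + ((gaussianReal (-d) 1) A).toReal)) ∧
    ∀ μ₁ μ₀ : ℝ,
      |μ₁ - μ₀| * stdNormalCDF (-(|μ₁ - μ₀| / (σ₁ + σ₀))) ≤
        (σ₁ + σ₀) * (d * stdNormalCDF (-d)) := by
  have hσ : 0 < σ₁ + σ₀ := by linarith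
  constructor
  · intro γ _ A hA
    have h := testing_lb hd.le A hA
    have hc : 0 ≤ (σ₁ + σ₀) * d := by positivity
    nlinarith
  · intro μ₁ μ₀
    set D := |μ₁ - μ₀| with hD
    have hD0 : 0 ≤ D := abs_nonneg _
    rcases hD0.eq_or_lt with h0 | h0
    · rw [← h0, zero_mul]
      have := stdNormalCDF_nonneg (-d)
      positivity
    · have hδ : (0:ℝ) < D / (σ₁ + σ₀) := div_pos h0 hσ
      have hm := hmax (Set.mem_Ioi.mpr hδ)
      simp only [Set.mem_setOf_eq] at hm
      have key : D / (σ₁ + σ₀) * stdNormalCDF (-(D / (σ₁ + σ₀))) ≤ d * stdNormalCDF (-d) := hm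
      calc D * stdNormalCDF (-(D / (σ₁ + σ₀)))
          = (σ₁ + σ₀) * (D / (σ₁ + σ₀) * stdNormalCDF (-(D / (σ₁ + σ₀)))) := by
            field_simp
        _ ≤ (σ₁ + σ₀) * (d * stdNormalCDF (-d)) :=
            mul_le_mul_of_nonneg_left key hσ.le
end
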